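/- Let $X = [x_1\; x_2\; \ldots\; x_n]$ be a real $k \times n$ matrix whose columns are points $x_i \in \mathbb{R}^k$, and let $D = \mathrm{edm}(X)$ be the $n \times n$ matrix with entries $d_{ij} = \|x_i - x_j\|_2^2$. Then the rank of $D$ is at most $k + 2$. -/

import Mathlib

/-!
Writing `G = Xᵀ X` for the Gram matrix and `g` for its diagonal, expanding the square gives
`D = g 1ᵀ + 1 gᵀ - 2 G`: two rank-one matrices plus a matrix that factors through `ℝ^k`.
Subadditivity of rank then gives `k + 2`.
-/

open Matrix Module

namespace Matrix

theorem rank_add_le {K m n : Type*} [Field K] [Fintype n] (A B : Matrix m n K) :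
    (A + B).rank ≤ A.rank + B.rank := by
  rw [rank, rank, rank, mulVecLin_add]
  calc finrank K (LinearMap.range (A.mulVecLin + B.mulVecLin))
      ≤ finrank K (LinearMap.range A.mulVecLin ⊔ LinearMap.range B.mulVecLin :
          Submodule K (m → K)) := by
        apply Submodule.finrank_mono
        rintro _ ⟨v, rfl⟩
        exact Submodule.add_mem_sup ⟨v, rfl⟩ ⟨v, rfl⟩
    _ ≤ _ := Submodule.finrank_add_le_finrank_add_finrank _ _

theorem of_sum_sub_sq_eq_gram {R k n : Type*} [CommRing R] [Fintype k] (X : Matrix k n R) :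
    of (fun i j => ∑ l, (X l i - X l j) ^ 2) =
      vecMulVec (Xᵀ * X).diag 1 + vecMulVec 1 (Xᵀ * X).diag + (-2 : R) • Xᵀ * X := by
  ext i j
  simp only [of_apply, add_apply, vecMulVec_apply, diag_apply, mul_apply, smul_mul, smul_apply,
    transpose_apply, Pi.one_apply, mul_one, one_mul, smul_eq_mul, Finset.mul_sum,
    ← Finset.sum_add_distrib]
  exact Finset.sum_congr rfl fun l _ => by ring

end Matrix

/-- The rank of the Euclidean distance matrix of `n` points in `ℝ^k`
(the columns of `X`) is at most `k + 2`. -/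
theorem rank_edm_le (k n : ℕ) (X : Matrix (Fin k) (Fin n) ℝ)
    (D : Matrix (Fin n) (Fin n) ℝ)
    (hD : ∀ i j, D i j = ∑ l, (X l i - X l j) ^ 2) :
    D.rank ≤ k + 2 := by
  set g := (Xᵀ * X).diag
  have hD_eq : D = vecMulVec g 1 + vecMulVec 1 g + (-2 : ℝ) • Xᵀ * X :=
    (Matrix.ext hD).trans (of_sum_sub_sq_eq_gram X)
  have hcross : ((-2 : ℝ) • Xᵀ * X).rank ≤ k :=
    (rank_mul_le_left _ _).trans (rank_le_width _)
  rw [hD_eq]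
  calc _ ≤ (vecMulVec g 1).rank + (vecMulVec 1 g).rank + ((-2 : ℝ) • Xᵀ * X).rank :=
        (rank_add_le _ _).trans (add_le_add_left (rank_add_le _ _) _)
    _ ≤ 1 + 1 + k :=
        add_le_add (add_le_add (rank_vecMulVec_le _ _) (rank_vecMulVec_le _ _)) hcross
    _ = k + 2 := by ring
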